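/- Let k ≥ 1 and p ∈ (1, 2). There exists a constant c = c(k,p) > 0 such that for all z, η ∈ ℝ^k one has |V_p(z) − V_p(η)| ≤ c |V_p(z − η)|. -/

import Mathlib

noncomputable def Vp (p : ℝ) {E : Type*} [NormedAddCommGroup E] [NormedSpace ℝ E] (z : E) : E :=
  ((1 + ‖z‖ ^ 2) ^ ((p - 2) / 4)) • z

/-!
Write `φ(t) = (1 + t²)^q` with `q = (p - 2)/4 ∈ [-1/2, 0]`, so that `‖V_p w‖ = φ(‖w‖) ‖w‖`;
`φ` is antitone and `t ↦ φ(t) t` is monotone. For `a = ‖η‖ ≤ b = ‖z‖` and `d = ‖z - η‖`,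
`V_p z - V_p η = φ(b) (z - η) + (φ(b) - φ(a)) η`. The first term is at most `2 φ(d) d` because
`d ≤ 2b`. The second is at most `φ(a) a ≤ φ(d) d` when `a ≤ d`, and when `d < a` the bound
`φ(a) - φ(b) ≤ φ(a) (b² - a²)/(1 + b²)` makes it at most `2 φ(a) d ≤ 2 φ(d) d`.
-/

open Real

lemma rpow_mul_div_le_rpow {x y r : ℝ} (hx : 0 < x) (hxy : x ≤ y) (hr : -1 ≤ r) :
    x ^ r * (x / y) ≤ y ^ r := by
  have hy : 0 < y := hx.trans_le hxy
  rw [mul_div_assoc', ← rpow_add_one hx.ne', div_le_iff₀ hy, ← rpow_add_one hy.ne']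
  exact rpow_le_rpow hx.le hxy (by linarith)

lemma rpow_sub_rpow_le {x y r : ℝ} (hx : 0 < x) (hxy : x ≤ y) (hr : -1 ≤ r) :
    x ^ r - y ^ r ≤ x ^ r * ((y - x) / y) := by
  have hy : y ≠ 0 := (hx.trans_le hxy).ne'
  have hsplit : x ^ r * ((y - x) / y) = x ^ r - x ^ r * (x / y) := by field_simp
  linarith [rpow_mul_div_le_rpow hx hxy hr]

section Weight

variable {q : ℝ}

-- Squaring reduces this to `φ(a)² a² ≤ φ(d)² d²`, i.e. to `rpow_mul_div_le_rpow` with `r = 2q`.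
lemma one_add_sq_rpow_mul_le_of_le {a d : ℝ} (hq : -1 / 2 ≤ q) (ha : 0 ≤ a) (had : a ≤ d) :
    (1 + a ^ 2) ^ q * a ≤ (1 + d ^ 2) ^ q * d := by
  have hd : 0 ≤ d := ha.trans had
  rw [← pow_le_pow_iff_left₀ (by positivity) (by positivity) two_ne_zero, mul_pow, mul_pow,
    ← rpow_mul_natCast (by positivity), ← rpow_mul_natCast (by positivity)]
  have hweight := rpow_mul_div_le_rpow (x := 1 + a ^ 2) (y := 1 + d ^ 2) (r := q * (2 : ℕ))
    (by positivity) (by gcongr) (by push_cast; linarith)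
  have hsq : a ^ 2 ≤ (1 + a ^ 2) / (1 + d ^ 2) * d ^ 2 := by
    rw [div_mul_eq_mul_div, le_div_iff₀ (by positivity)]
    nlinarith [pow_le_pow_left₀ ha had 2]
  calc (1 + a ^ 2) ^ (q * (2 : ℕ)) * a ^ 2
      ≤ (1 + a ^ 2) ^ (q * (2 : ℕ)) * ((1 + a ^ 2) / (1 + d ^ 2) * d ^ 2) := by gcongr
    _ = (1 + a ^ 2) ^ (q * (2 : ℕ)) * ((1 + a ^ 2) / (1 + d ^ 2)) * d ^ 2 := by ring
    _ ≤ (1 + d ^ 2) ^ (q * (2 : ℕ)) * d ^ 2 := by gcongr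

lemma one_add_sq_rpow_mul_le_two_mul {b d : ℝ} (hq : -1 / 2 ≤ q) (hq0 : q ≤ 0) (hb : 0 ≤ b)
    (hd : 0 ≤ d) (hdb : d ≤ 2 * b) :
    (1 + b ^ 2) ^ q * d ≤ 2 * ((1 + d ^ 2) ^ q * d) := by
  rcases le_or_gt d b with hdb' | hbd
  · have : (1 + b ^ 2) ^ q ≤ (1 + d ^ 2) ^ q :=
      rpow_le_rpow_of_nonpos (by positivity) (by gcongr) hq0
    nlinarith [rpow_nonneg (by positivity : (0 : ℝ) ≤ 1 + d ^ 2) q]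
  · calc (1 + b ^ 2) ^ q * d ≤ 2 * ((1 + b ^ 2) ^ q * b) := by
          nlinarith [rpow_nonneg (by positivity : (0 : ℝ) ≤ 1 + b ^ 2) q]
      _ ≤ 2 * ((1 + d ^ 2) ^ q * d) := by
          linarith [one_add_sq_rpow_mul_le_of_le hq hb hbd.le]

lemma one_add_sq_rpow_sub_mul_le_two_mul {a b d : ℝ} (hq : -1 / 2 ≤ q) (hq0 : q ≤ 0)
    (ha : 0 ≤ a) (hab : a ≤ b) (hbd : b - a ≤ d) :
    ((1 + a ^ 2) ^ q - (1 + b ^ 2) ^ q) * a ≤ 2 * ((1 + d ^ 2) ^ q * d) := by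
  have hφb : 0 ≤ (1 + b ^ 2) ^ q := rpow_nonneg (by positivity) q
  have hφd : 0 ≤ (1 + d ^ 2) ^ q := rpow_nonneg (by positivity) q
  rcases le_or_gt a d with had | hda
  · calc ((1 + a ^ 2) ^ q - (1 + b ^ 2) ^ q) * a ≤ (1 + a ^ 2) ^ q * a := by nlinarith
      _ ≤ (1 + d ^ 2) ^ q * d := one_add_sq_rpow_mul_le_of_le hq ha had
      _ ≤ 2 * ((1 + d ^ 2) ^ q * d) := by nlinarith
  · have hdiff := rpow_sub_rpow_le (x := 1 + a ^ 2) (y := 1 + b ^ 2) (r := q) (by positivity)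
      (by gcongr) (by linarith)
    rw [add_sub_add_left_eq_sub] at hdiff
    have hsq : 0 ≤ b ^ 2 - a ^ 2 := by nlinarith
    have hquot : (b ^ 2 - a ^ 2) / (1 + b ^ 2) * a ≤ 2 * d := by
      rw [div_mul_eq_mul_div, div_le_iff₀ (by positivity)]
      calc (b ^ 2 - a ^ 2) * a = (b - a) * ((b + a) * a) := by ring
        _ ≤ d * (2 * (1 + b ^ 2)) := mul_le_mul hbd (by nlinarith) (by nlinarith) (by linarith)
        _ = 2 * d * (1 + b ^ 2) := by ring
    have hφ : (1 + a ^ 2) ^ q ≤ (1 + d ^ 2) ^ q :=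
      rpow_le_rpow_of_nonpos (by positivity) (by nlinarith) hq0
    calc ((1 + a ^ 2) ^ q - (1 + b ^ 2) ^ q) * a
        ≤ (1 + a ^ 2) ^ q * ((b ^ 2 - a ^ 2) / (1 + b ^ 2)) * a := by gcongr
      _ = (1 + a ^ 2) ^ q * ((b ^ 2 - a ^ 2) / (1 + b ^ 2) * a) := by ring
      _ ≤ (1 + d ^ 2) ^ q * (2 * d) := by gcongr
      _ = 2 * ((1 + d ^ 2) ^ q * d) := by ring

end Weight

section Vp

variable {E : Type*} [NormedAddCommGroup E] [NormedSpace ℝ E] {p : ℝ}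

lemma norm_Vp (w : E) : ‖Vp p w‖ = (1 + ‖w‖ ^ 2) ^ ((p - 2) / 4) * ‖w‖ := by
  rw [Vp, norm_smul, norm_of_nonneg (by positivity)]

lemma norm_Vp_sub_Vp_le_of_norm_le (hp0 : 0 ≤ p) (hp2 : p ≤ 2) {z η : E} (h : ‖η‖ ≤ ‖z‖) :
    ‖Vp p z - Vp p η‖ ≤ 4 * ‖Vp p (z - η)‖ := by
  set q := (p - 2) / 4
  have hq : -1 / 2 ≤ q := by simp only [q]; linarith
  have hq0 : q ≤ 0 := by simp only [q]; linarith
  have hφ : (1 + ‖z‖ ^ 2) ^ q ≤ (1 + ‖η‖ ^ 2) ^ q :=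
    rpow_le_rpow_of_nonpos (by positivity) (by gcongr) hq0
  calc ‖Vp p z - Vp p η‖
      = ‖(1 + ‖z‖ ^ 2) ^ q • (z - η) + ((1 + ‖z‖ ^ 2) ^ q - (1 + ‖η‖ ^ 2) ^ q) • η‖ := by
        rw [Vp, Vp]; congr 1; module
    _ ≤ (1 + ‖z‖ ^ 2) ^ q * ‖z - η‖ + ((1 + ‖η‖ ^ 2) ^ q - (1 + ‖z‖ ^ 2) ^ q) * ‖η‖ := by
        refine (norm_add_le _ _).trans_eq ?_
        rw [norm_smul, norm_smul, norm_of_nonneg (by positivity), norm_of_nonpos (by linarith),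
          neg_sub]
    _ ≤ 2 * ((1 + ‖z - η‖ ^ 2) ^ q * ‖z - η‖) + 2 * ((1 + ‖z - η‖ ^ 2) ^ q * ‖z - η‖) :=
        add_le_add
          (one_add_sq_rpow_mul_le_two_mul hq hq0 (norm_nonneg _) (norm_nonneg _)
            ((norm_sub_le z η).trans (by linarith)))
          (one_add_sq_rpow_sub_mul_le_two_mul hq hq0 (norm_nonneg _) h (norm_sub_norm_le z η))
    _ = 4 * ‖Vp p (z - η)‖ := by rw [norm_Vp]; ring

lemma norm_Vp_sub_Vp_le (hp0 : 0 ≤ p) (hp2 : p ≤ 2) (z η : E) :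
    ‖Vp p z - Vp p η‖ ≤ 4 * ‖Vp p (z - η)‖ := by
  rcases le_total ‖η‖ ‖z‖ with h | h
  · exact norm_Vp_sub_Vp_le_of_norm_le hp0 hp2 h
  · have := norm_Vp_sub_Vp_le_of_norm_le hp0 hp2 h
    rwa [norm_sub_rev, norm_Vp, norm_sub_rev η z, ← norm_Vp] at this

end Vp

theorem stmt_5_general (k : ℕ) (p : ℝ) (hp1 : 1 < p) (hp2 : p < 2) :
    ∃ c : ℝ, 0 < c ∧ ∀ z η : EuclideanSpace ℝ (Fin k),
      ‖Vp p z - Vp p η‖ ≤ c * ‖Vp p (z - η)‖ :=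
  ⟨4, by norm_num, norm_Vp_sub_Vp_le (by linarith) hp2.le⟩

theorem stmt_5 (k : ℕ) (hk : 1 ≤ k) (p : ℝ) (hp1 : 1 < p) (hp2 : p < 2) :
    ∃ c : ℝ, 0 < c ∧ ∀ z η : EuclideanSpace ℝ (Fin k),
      ‖Vp p z - Vp p η‖ ≤ c * ‖Vp p (z - η)‖ :=
  stmt_5_general k p hp1 hp2
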